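/- If s ∈ S(t) for some s, t ∈ V, then t ∈ T(u) and s ∈ S(v); that is, every affected pair has its source among the affected sources of v and its target among the affected targets of u. -/

import Mathlib

/-!
A pair `(s, t)` is affected exactly when some shortest `s`-`t` path of `G'` uses the updated
edge `(u, v)`. Paths avoiding `(u, v)` weigh the same in `G` and `G'`, while paths through it are
strictly lighter in `G'` (or absent from `G`). So if no shortest path of `G'` uses `(u, v)`, the
distances agree and the two sets of shortest paths coincide; and if `d` and `σ` are unchanged, the
shortest paths of `G` stay shortest in `G'` and, by counting, are all of them, so none uses
`(u, v)`.

Splitting such a path `x ++ u :: v :: y` gives the shortest paths `u :: v :: y` from `u` to `t` and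
`x ++ [u, v]` from `s` to `v`, both through `(u, v)`, because subpaths of shortest paths are
shortest.
-/

open scoped BigOperators

/-- A directed graph on vertex set `V` with positive real edge weights. -/
structure WDigraph (V : Type*) where
  /-- the edge relation -/
  E : V → V → Prop
  /-- the edge weights -/
  w : V → V → ℝ
  /-- weights of edges are positive -/
  pos : ∀ a b, E a b → 0 < w a b

namespace WDigraph

variable {V : Type*} [Fintype V] [DecidableEq V]

/-- `p` is a simple path from `s` to `t` in `G`: a nonempty list of pairwise
distinct vertices starting at `s`, ending at `t`, consecutive vertices joined
by edges. (Since all weights are positive, every shortest path is simple, so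
it suffices to consider simple paths throughout.) -/
def IsPath (G : WDigraph V) (s t : V) (p : List V) : Prop :=
  List.Chain' G.E p ∧ p.head? = some s ∧ p.getLast? = some t ∧ p.Nodup

/-- The total weight of a list of vertices (sum of the weights of consecutive pairs). -/
def pw (G : WDigraph V) : List V → ℝ
  | [] => 0
  | [_] => 0
  | a :: b :: r => G.w a b + G.pw (b :: r)

/-- `d(s,t)`: shortest-path distance from `s` to `t`, equal to `⊤` (infinity)
if `t` is unreachable from `s`. -/
noncomputable def dist (G : WDigraph V) (s t : V) : EReal :=
  sInf ((fun p => (G.pw p : EReal)) '' {p | G.IsPath s t p})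

/-- The set of shortest `s`-`t` paths in `G`. -/
def SP (G : WDigraph V) (s t : V) : Set (List V) :=
  {p | G.IsPath s t p ∧ (G.pw p : EReal) = G.dist s t}

/-- `σ_{st}`: the number of shortest `s`-`t` paths in `G`. -/
noncomputable def sigma (G : WDigraph V) (s t : V) : ℕ :=
  (G.SP s t).ncard

/-- `σ_{st}(v)`: the number of shortest `s`-`t` paths in `G` that contain `v`. -/
noncomputable def sigmaV (G : WDigraph V) (s t v : V) : ℕ :=
  {p ∈ G.SP s t | v ∈ p}.ncard

/-- `σ_{st}(v,w)`: the number of shortest `s`-`t` paths in `G` using the edge `(v,w)`. -/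
noncomputable def sigmaE (G : WDigraph V) (s t v w : V) : ℕ :=
  {p ∈ G.SP s t | [v, w] <:+: p}.ncard

/-- `P_s(t)`: the set of predecessors of `t` with respect to source `s`:
nodes `y` with `(y,t) ∈ E` and `d(s,y) + ω(y,t) = d(s,t) < ∞`. -/
def pred (G : WDigraph V) (s t : V) : Set V :=
  {y | G.E y t ∧ G.dist s y + (G.w y t : EReal) = G.dist s t ∧ G.dist s t < ⊤}

/-- `δ_{s•}(v)`: Brandes's one-sided dependency of `s` on `v`
(a summand is `0` whenever its denominator is `0`, which is automatic since
in Lean division by zero yields zero). -/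
noncomputable def delta (G : WDigraph V) (s v : V) : ℝ :=
  ∑ᶠ t ∈ {t : V | t ≠ s ∧ t ≠ v}, (G.sigmaV s t v : ℝ) / (G.sigma s t : ℝ)

/-- `c_B(v)`: the betweenness centrality of `v`. -/
noncomputable def bc (G : WDigraph V) (v : V) : ℝ :=
  ∑ᶠ s ∈ {s : V | s ≠ v}, G.delta s v

/-- `G'` is obtained from `G` by the incremental update `(u, v, ω'(u,v))`:
either a new edge `(u,v) ∉ E` is inserted with positive weight, or the weight
of the existing edge `(u,v)` is decreased; all other edges and weights are
unchanged. (Positivity of all weights is part of the `WDigraph` structure.) -/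
structure IsUpdate (G G' : WDigraph V) (u v : V) : Prop where
  /-- the updated edge is present in `G'` -/
  edge' : G'.E u v
  /-- `E' = E ∪ {(u,v)}` -/
  edge_iff : ∀ a b, G'.E a b ↔ G.E a b ∨ a = u ∧ b = v
  /-- `ω'` agrees with `ω` on all edges other than `(u,v)` -/
  weight_eq : ∀ a b, ¬(a = u ∧ b = v) → G'.w a b = G.w a b
  /-- either an insertion of a new edge, or a weight decrease of an existing one -/
  insert_or_decrease : ¬ G.E u v ∨ (G.E u v ∧ G'.w u v < G.w u v)

/-- `S(t)`: the affected sources of `t`. -/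
def affS (G G' : WDigraph V) (t : V) : Set V :=
  {s | G.dist s t > G'.dist s t ∨ G.sigma s t ≠ G'.sigma s t}

/-- `T(s)`: the affected targets of `s`. -/
def affT (G G' : WDigraph V) (s : V) : Set V :=
  {t | G.dist s t > G'.dist s t ∨ G.sigma s t ≠ G'.sigma s t}

/-- `Δ_{s•}(v) = Σ_{t ∈ T(s), t ≠ v} σ_{st}(v)/σ_{st}`, computed in `G`
(`0`-convention for zero denominators). -/
noncomputable def Delta (G G' : WDigraph V) (s v : V) : ℝ :=
  ∑ᶠ t ∈ {t : V | t ∈ affT G G' s ∧ t ≠ v}, (G.sigmaV s t v : ℝ) / (G.sigma s t : ℝ)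

/-- `Δ'_{s•}(v) = Σ_{t ∈ T(s), t ≠ v} σ'_{st}(v)/σ'_{st}`, computed in `G'`
(`0`-convention for zero denominators). -/
noncomputable def Delta' (G G' : WDigraph V) (s v : V) : ℝ :=
  ∑ᶠ t ∈ {t : V | t ∈ affT G G' s ∧ t ≠ v}, (G'.sigmaV s t v : ℝ) / (G'.sigma s t : ℝ)

theorem _root_.List.exists_eq_append_cons_append_cons_of_not_nodup {α : Type*} {l : List α}
    (h : ¬ l.Nodup) : ∃ c x y z, l = x ++ c :: (y ++ c :: z) := by
  induction l with
  | nil => exact absurd List.nodup_nil h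
  | cons a l ih =>
    by_cases ha : a ∈ l
    · obtain ⟨y, z, rfl⟩ := List.append_of_mem ha
      exact ⟨a, [], y, z, rfl⟩
    · obtain ⟨c, x, y, z, rfl⟩ := ih fun hl => h (List.nodup_cons.2 ⟨ha, hl⟩)
      exact ⟨c, a :: x, y, z, rfl⟩

theorem _root_.List.isChain_not_pair_of_not_infix {α : Type*} {u v : α} {l : List α}
    (h : ¬ [u, v] <:+: l) : l.IsChain fun a b => ¬ (a = u ∧ b = v) := by
  refine List.isChain_iff_forall_rel_of_append_cons_cons.2 ?_
  rintro a b x y rfl ⟨rfl, rfl⟩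
  exact h ⟨x, y, by simp⟩

section ShortestPaths

omit [Fintype V] [DecidableEq V]

variable {G : WDigraph V}

@[simp] lemma pw_cons_cons (a b : V) (p : List V) : G.pw (a :: b :: p) = G.w a b + G.pw (b :: p) :=
  rfl

lemma pw_append_cons (x : List V) (c : V) (y : List V) :
    G.pw (x ++ c :: y) = G.pw (x ++ [c]) + G.pw (c :: y) := by
  induction x with
  | nil => simp [pw]
  | cons a x ih =>
    cases x with
    | nil => simp [pw]
    | cons b x => simp_all [add_assoc]

lemma pw_nonneg {p : List V} (hp : p.IsChain G.E) : 0 ≤ G.pw p := by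
  fun_induction G.pw p with
  | case1 | case2 => rfl
  | case3 a b p ih =>
    rw [List.isChain_cons_cons] at hp
    exact add_nonneg (G.pos a b hp.1).le (ih hp.2)

lemma pw_le_pw_of_isChain {H : WDigraph V} {p : List V}
    (hp : p.IsChain fun a b => H.w a b ≤ G.w a b) : H.pw p ≤ G.pw p := by
  fun_induction H.pw p with
  | case1 | case2 => rfl
  | case3 a b p ih =>
    rw [List.isChain_cons_cons] at hp
    exact add_le_add hp.1 (ih hp.2)

lemma pw_eq_pw_of_isChain {H : WDigraph V} {p : List V}
    (hp : p.IsChain fun a b => H.w a b = G.w a b) : H.pw p = G.pw p :=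
  le_antisymm (pw_le_pw_of_isChain (hp.imp fun _ _ => le_of_eq))
    (pw_le_pw_of_isChain (hp.imp fun _ _ => ge_of_eq))

variable (G) in
def IsWalk (s t : V) (p : List V) : Prop :=
  p.IsChain G.E ∧ p.head? = some s ∧ p.getLast? = some t

variable {s t : V} {p : List V}

lemma IsPath.isWalk (hp : G.IsPath s t p) : G.IsWalk s t p :=
  ⟨hp.1, hp.2.1, hp.2.2.1⟩

lemma IsWalk.isPath (hp : G.IsWalk s t p) (hnd : p.Nodup) : G.IsPath s t p :=
  ⟨hp.1, hp.2.1, hp.2.2, hnd⟩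

lemma isWalk_append_cons_iff {c : V} {x y : List V} :
    G.IsWalk s t (x ++ c :: y) ↔ G.IsWalk s c (x ++ [c]) ∧ G.IsWalk c t (c :: y) := by
  have hhead : (x ++ c :: y).head? = (x ++ [c]).head? := by cases x <;> rfl
  have hlast : (x ++ c :: y).getLast? = (c :: y).getLast? := by
    simp [List.getLast?_append, List.getLast?_cons]
  unfold IsWalk
  rw [List.isChain_split, hhead, hlast]
  simp only [List.head?_cons, List.getLast?_append, List.getLast?_singleton]
  tauto

lemma dist_le_pw (hp : G.IsPath s t p) : G.dist s t ≤ G.pw p :=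
  sInf_le ⟨p, hp, rfl⟩

lemma dist_le_pw_of_isWalk (hp : G.IsWalk s t p) : G.dist s t ≤ G.pw p := by
  induction hn : p.length using Nat.strong_induction_on generalizing p with
  | _ n ih =>
  by_cases hnd : p.Nodup
  · exact dist_le_pw (hp.isPath hnd)
  obtain ⟨c, x, y, z, rfl⟩ := List.exists_eq_append_cons_append_cons_of_not_nodup hnd
  -- cutting out the cycle `c :: y ++ [c]` leaves a shorter walk of no greater weight
  rw [isWalk_append_cons_iff (x := x), ← List.cons_append,
    isWalk_append_cons_iff (x := c :: y)] at hp
  obtain ⟨hx, hcycle, hz⟩ := hp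
  have hshort : G.pw (x ++ c :: z) ≤ G.pw (x ++ c :: (y ++ c :: z)) := by
    rw [pw_append_cons x c z, pw_append_cons x c (y ++ c :: z), ← List.cons_append,
      pw_append_cons (c :: y)]
    linarith [pw_nonneg hcycle.1]
  calc G.dist s t ≤ G.pw (x ++ c :: z) :=
        ih _ (by simp [← hn]) (isWalk_append_cons_iff.2 ⟨hx, hz⟩) rfl
    _ ≤ _ := EReal.coe_le_coe_iff.2 hshort

lemma mem_SP_iff :
    p ∈ G.SP s t ↔ G.IsPath s t p ∧ ∀ q, G.IsWalk s t q → G.pw p ≤ G.pw q := by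
  refine ⟨fun hp => ⟨hp.1, fun q hq => ?_⟩, fun ⟨hp, hmin⟩ => ⟨hp, ?_⟩⟩
  · exact EReal.coe_le_coe_iff.1 (hp.2 ▸ dist_le_pw_of_isWalk hq)
  · refine le_antisymm (le_sInf ?_) (dist_le_pw hp)
    rintro _ ⟨q, hq, rfl⟩
    exact EReal.coe_le_coe_iff.2 (hmin q hq.isWalk)

lemma append_cons_mem_SP {c : V} {x y : List V} (hp : x ++ c :: y ∈ G.SP s t) :
    x ++ [c] ∈ G.SP s c ∧ c :: y ∈ G.SP c t := by
  obtain ⟨hpath, hmin⟩ := mem_SP_iff.1 hp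
  obtain ⟨hx, hy⟩ := isWalk_append_cons_iff.1 hpath.isWalk
  have hnd : (x ++ [c] ++ y).Nodup := by simpa using hpath.2.2.2
  have hnd' : (c :: y).Nodup := (List.sublist_append_right _ _).nodup hpath.2.2.2
  refine ⟨mem_SP_iff.2 ⟨hx.isPath ((List.sublist_append_left _ _).nodup hnd), fun q hq => ?_⟩,
    mem_SP_iff.2 ⟨hy.isPath hnd', fun q hq => ?_⟩⟩
  · obtain ⟨q, rfl⟩ := List.getLast?_eq_some_iff.1 hq.2.2
    have := hmin _ (isWalk_append_cons_iff.2 ⟨hq, hy⟩)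
    rw [pw_append_cons x c y, pw_append_cons q c y] at this
    linarith
  · obtain ⟨q, rfl⟩ := List.head?_eq_some_iff.1 hq.2.1
    have := hmin _ (isWalk_append_cons_iff.2 ⟨hx, hq⟩)
    rw [pw_append_cons x c y, pw_append_cons x c q] at this
    linarith

end ShortestPaths

section Update

omit [Fintype V] [DecidableEq V]

variable {G G' : WDigraph V} {u v s t : V} {p : List V}

lemma IsUpdate.w_le (h : IsUpdate G G' u v) {a b : V} (hab : G.E a b) : G'.w a b ≤ G.w a b := by
  by_cases huv : a = u ∧ b = v
  · obtain ⟨rfl, rfl⟩ := huv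
    exact (h.insert_or_decrease.resolve_left (not_not.2 hab)).2.le
  · exact (h.weight_eq a b huv).le

lemma IsUpdate.pw_le (h : IsUpdate G G' u v) (hp : p.IsChain G.E) : G'.pw p ≤ G.pw p :=
  pw_le_pw_of_isChain (hp.imp fun _ _ => h.w_le)

lemma IsUpdate.pw_lt_of_infix (h : IsUpdate G G' u v) (hp : p.IsChain G.E) (hi : [u, v] <:+: p) :
    G'.pw p < G.pw p := by
  obtain ⟨x, y, rfl⟩ := hi
  rw [List.append_assoc, List.cons_append, List.singleton_append] at hp ⊢
  obtain ⟨hx, huv, hy⟩ := List.isChain_append_cons_cons.1 hp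
  have hw : G'.w u v < G.w u v := (h.insert_or_decrease.resolve_left (not_not.2 huv)).2
  rw [pw_append_cons x u (v :: y), pw_append_cons x u (v :: y), pw_cons_cons, pw_cons_cons]
  linarith [h.pw_le hx, h.pw_le hy]

lemma IsUpdate.pw_eq_of_not_infix (h : IsUpdate G G' u v) (hi : ¬ [u, v] <:+: p) :
    G'.pw p = G.pw p :=
  pw_eq_pw_of_isChain ((List.isChain_not_pair_of_not_infix hi).imp fun a b => h.weight_eq a b)

lemma IsUpdate.isPath (h : IsUpdate G G' u v) (hp : G.IsPath s t p) : G'.IsPath s t p :=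
  ⟨hp.1.imp fun a b hab => (h.edge_iff a b).2 (Or.inl hab), hp.2⟩

lemma IsUpdate.isPath_of_not_infix (h : IsUpdate G G' u v) (hp : G'.IsPath s t p)
    (hi : ¬ [u, v] <:+: p) : G.IsPath s t p := by
  have hE := List.isChain_iff_forall_rel_of_append_cons_cons.1 hp.1
  have hne := List.isChain_iff_forall_rel_of_append_cons_cons.1
    (List.isChain_not_pair_of_not_infix hi)
  exact ⟨List.isChain_iff_forall_rel_of_append_cons_cons.2 fun a b _ _ hxy =>
    ((h.edge_iff a b).1 (hE hxy)).resolve_right (hne hxy), hp.2⟩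

lemma IsUpdate.dist_le (h : IsUpdate G G' u v) (s t : V) : G'.dist s t ≤ G.dist s t := by
  refine le_sInf ?_
  rintro _ ⟨p, hp, rfl⟩
  exact (dist_le_pw (h.isPath hp)).trans (EReal.coe_le_coe_iff.2 (h.pw_le hp.1))

lemma IsUpdate.mem_SP'_and_not_infix_of_mem_SP (h : IsUpdate G G' u v)
    (hd : G.dist s t = G'.dist s t)
    (hp : p ∈ G.SP s t) : p ∈ G'.SP s t ∧ ¬ [u, v] <:+: p := by
  have hle : G.pw p ≤ G'.pw p := EReal.coe_le_coe_iff.1 <| by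
    rw [hp.2, hd]
    exact dist_le_pw (h.isPath hp.1)
  have hi : ¬ [u, v] <:+: p := fun hi => (h.pw_lt_of_infix hp.1.1 hi).not_ge hle
  exact ⟨⟨h.isPath hp.1, by rw [h.pw_eq_of_not_infix hi, hp.2, hd]⟩, hi⟩

lemma IsUpdate.mem_SP_of_mem_SP'_of_not_infix (h : IsUpdate G G' u v)
    (hd : G.dist s t = G'.dist s t)
    (hp : p ∈ G'.SP s t) (hi : ¬ [u, v] <:+: p) : p ∈ G.SP s t :=
  ⟨h.isPath_of_not_infix hp.1 hi, by rw [← h.pw_eq_of_not_infix hi, hp.2, hd]⟩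

end Update

section Finite

omit [DecidableEq V]

variable {G G' : WDigraph V} {u v s t : V}

lemma finite_setOf_isPath (G : WDigraph V) (s t : V) : {p | G.IsPath s t p}.Finite :=
  (List.finite_length_le V (Fintype.card V)).subset fun _ hp => hp.2.2.2.length_le_card

lemma finite_SP (G : WDigraph V) (s t : V) : (G.SP s t).Finite :=
  (G.finite_setOf_isPath s t).subset fun _ hp => hp.1

lemma exists_mem_SP_of_dist_lt_top (hd : G.dist s t < ⊤) : ∃ p, p ∈ G.SP s t := by
  obtain ⟨p, hp⟩ : {p | G.IsPath s t p}.Nonempty := by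
    by_contra! hempty
    rw [dist, hempty, Set.image_empty, sInf_empty] at hd
    exact hd.ne rfl
  obtain ⟨q, hq, hpw⟩ :=
    (Set.Nonempty.image (fun p => (G.pw p : EReal)) ⟨p, hp⟩).csInf_mem
      ((G.finite_setOf_isPath s t).image _)
  exact ⟨q, hq, hpw⟩

lemma IsUpdate.dist_eq_of_forall_not_infix (h : IsUpdate G G' u v)
    (hni : ∀ q ∈ G'.SP s t, ¬ [u, v] <:+: q) : G.dist s t = G'.dist s t := by
  refine le_antisymm ?_ (h.dist_le s t)
  obtain htop | htop := (le_top : G'.dist s t ≤ ⊤).eq_or_lt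
  · exact htop ▸ le_top
  obtain ⟨p, hp⟩ := exists_mem_SP_of_dist_lt_top htop
  calc G.dist s t ≤ G.pw p := dist_le_pw (h.isPath_of_not_infix hp.1 (hni p hp))
    _ = G'.pw p := by rw [h.pw_eq_of_not_infix (hni p hp)]
    _ = G'.dist s t := hp.2

lemma IsUpdate.mem_affS_iff (h : IsUpdate G G' u v) :
    s ∈ affS G G' t ↔ ∃ q ∈ G'.SP s t, [u, v] <:+: q := by
  constructor
  · intro hs
    by_contra! hni
    have hd := h.dist_eq_of_forall_not_infix hni
    have hSP : G.SP s t = G'.SP s t := Set.Subset.antisymm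
      (fun p hp => (h.mem_SP'_and_not_infix_of_mem_SP hd hp).1)
      (fun p hp => h.mem_SP_of_mem_SP'_of_not_infix hd hp (hni p hp))
    exact hs.elim (fun hlt => hlt.ne' hd) (fun hσ => hσ (by rw [sigma, sigma, hSP]))
  · rintro ⟨q, hq, hi⟩
    by_contra hs
    obtain ⟨hdist, hσ⟩ := not_or.1 hs
    have hd := le_antisymm (not_lt.1 hdist) (h.dist_le s t)
    have hSP : G.SP s t = G'.SP s t := Set.eq_of_subset_of_ncard_le
      (fun p hp => (h.mem_SP'_and_not_infix_of_mem_SP hd hp).1) (not_not.1 hσ).ge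
      (G'.finite_SP s t)
    exact (h.mem_SP'_and_not_infix_of_mem_SP hd (hSP ▸ hq)).2 hi

end Finite

/-- If `s ∈ S(t)` for some `s, t ∈ V`, then `t ∈ T(u)` and
`s ∈ S(v)`: every affected pair has its source among the affected sources of `v`
and its target among the affected targets of `u`. -/
theorem affected_pair_mem (G G' : WDigraph V) (u v : V)
    (h : IsUpdate G G' u v) (s t : V) (hs : s ∈ affS G G' t) :
    t ∈ affT G G' u ∧ s ∈ affS G G' v := by
  obtain ⟨q, hq, x, y, rfl⟩ := h.mem_affS_iff.1 hs
  rw [List.append_assoc, List.cons_append, List.singleton_append] at hq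
  have hsuffix : u :: v :: y ∈ G'.SP u t := (append_cons_mem_SP hq).2
  rw [← List.singleton_append, ← List.append_assoc] at hq
  have hprefix : x ++ [u] ++ [v] ∈ G'.SP s v := (append_cons_mem_SP hq).1
  exact ⟨h.mem_affS_iff.2 ⟨_, hsuffix, [], y, rfl⟩,
    h.mem_affS_iff.2 ⟨_, hprefix, x, [], by simp⟩⟩

end WDigraph
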